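/- arXiv:2512.17790 — 3 statements merged into one kernel-verified Lean document; each statement's English description precedes it below -/
import Mathlib

section
/- Let n, d, d', λ be positive integers with λ ≥ 2, let m be an integer with 0 ≤ m ≤ min(d, d') − 1, and set κ = gcd(d, d', n). Let Γ be a finite additive abelian group whose order divides n and H' a subgroup of Γ. Let X be a finite set and let c assign to each unordered pair of distinct elements of X an element of the quotient group Γ/H'; for A ⊆ X and w ∈ X \ A write c(A, w) = Σ_{a ∈ A} c({a, w}). Suppose that: (a) for every A ⊆ X with |A| = d, the set {c(A, w) : w ∈ X \ A} has at most λ − 1 elements; (b) for every A ⊆ X with |A| = d', the set {c(A, w) : w ∈ X \ A} has at most λ − 1 elements; (c) for all U, V ⊆ X with |U| = d − 1, |V| = d' − 1 and |U ∩ V| = m, the set {c(U, w) + c({w, w'}) + c(V, w') : w, w' ∈ X \ (U ∪ V), w ≠ w'} has at most λ − 1 elements. Then there exist a subset I ⊆ X, a subset S ⊆ Γ with |S| ≤ λ − 1, and a map C' : I → Γ such that: (1) (|I| + d + d') · (λ − 1)^{d + d'} ≥ |X|; (2) κ · C'(x) ∈ H' for every x ∈ I; and (3) for all distinct x, y ∈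 I there exists s ∈ S such that c({x, y}) equals the image of s + C'(x) + C'(y) under the quotient map Γ → Γ/H'. -/
/-!
Fix disjoint sets `M, R, S, M'` of sizes `m, d - 1 - m, d' - 1 - m, m`, two more vertices
`x₀, y₀`, and put `U = M ∪ R`, `W = M ∪ S`. Every other vertex `w` gets a fingerprint of
`d + d'` sums of the form `c(A, w)` or `c(A, w) + c(w, y)`, each taking at most `λ - 1` values
by (a), (b) or (c); so one fingerprint is shared by a set `I` with
`|X| - (d + d') ≤ (λ - 1)^(d + d') |I|`. On `I` the difference `c(u, w) - c(u, w₀)` does not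
depend on `u ∈ {x₀} ∪ U ∪ W`; calling it `Δ w`, the constancy of `c({x₀} ∪ U, ·)` and
`c({x₀} ∪ W, ·)` on `I` gives `d • Δ w = d' • Δ w = 0`, and `n • Δ w = 0` because `|Γ| ∣ n`,
so `κ • Δ w = 0`. Finally `c(U, x) + c(x, y) + c(W, y)` takes at most `λ - 1` values by (c),
and on `I` it is `c(x, y) - Δ x - Δ y` up to a constant.
-/

open scoped Classical

open Finset

section Counting

variable {ι α β : Type*} [DecidableEq β]

theorem exists_card_le_mul_card_fiber (s : Finset α) (f : α → β) (hs : s.Nonempty) :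
    ∃ a ∈ s, #s ≤ #{x ∈ s | f x = f a} * #(s.image f) := by
  obtain ⟨a, ha, hmax⟩ := exists_max_image s (fun a => #{x ∈ s | f x = f a}) hs
  refine ⟨a, ha, card_le_mul_card_image s _ fun _ hb => ?_⟩
  obtain ⟨b, hbs, rfl⟩ := mem_image.1 hb
  exact hmax b hbs

theorem card_image_pi_le_pow [Fintype ι] [DecidableEq ι] (s : Finset α) (f : α → ι → β)
    {K : ℕ} (hf : ∀ i, #(s.image fun a => f a i) ≤ K) :
    #(s.image f) ≤ K ^ Fintype.card ι :=
  calc #(s.image f)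
      ≤ #(Fintype.piFinset fun i => s.image fun a => f a i) :=
        card_le_card fun g hg => by
          obtain ⟨a, ha, rfl⟩ := mem_image.1 hg
          exact Fintype.mem_piFinset.2 fun i => mem_image_of_mem _ ha
    _ = ∏ i, #(s.image fun a => f a i) := Fintype.card_piFinset _
    _ ≤ K ^ Fintype.card ι := prod_le_pow_card _ _ _ fun i _ => hf i

theorem exists_disjoint_card_eq [Fintype α] [DecidableEq α] (s : Finset α) {k : ℕ}
    (h : #s + k ≤ Fintype.card α) : ∃ t, Disjoint s t ∧ #t = k := by
  obtain ⟨t, hts, htk⟩ :=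
    exists_subset_card_eq (s := sᶜ) (n := k) (by rw [card_compl]; omega)
  exact ⟨t, disjoint_of_subset_right hts disjoint_compl_right, htk⟩

end Counting

section Torsion

variable {α G : Type*} [AddCommGroup G]

theorem card_nsmul_eq_zero_of_sum_eq {s : Finset α} {f g : α → G} {δ : G}
    (hfg : ∀ a ∈ s, f a - g a = δ) (hsum : ∑ a ∈ s, f a = ∑ a ∈ s, g a) :
    #s • δ = 0 := by
  rw [← sum_const, ← sum_congr rfl hfg, sum_sub_distrib, hsum, sub_self]

theorem QuotientAddGroup.nsmul_eq_zero_of_card_dvd [Fintype G] {H : AddSubgroup G} {n : ℕ}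
    (hn : Fintype.card G ∣ n) (q : G ⧸ H) : n • q = 0 := by
  induction q using QuotientAddGroup.induction_on with
  | H g =>
    rw [← QuotientAddGroup.mk_nsmul,
      addOrderOf_dvd_iff_nsmul_eq_zero.1 (addOrderOf_dvd_card.trans hn), QuotientAddGroup.mk_zero]

end Torsion

section Gadgets

variable {X G : Type*} [AddCommGroup G] (c : Sym2 X → G)

/-- The paper's `c(A, w)`. -/
def pairSum (A : Finset X) (w : X) : G := ∑ u ∈ A, c s(u, w)

theorem pairSum_insert [DecidableEq X] {x : X} {A : Finset X} (hx : x ∉ A) (w : X) :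
    pairSum c (insert x A) w = c s(x, w) + pairSum c A w :=
  sum_insert hx

theorem sub_eq_sub_of_pairSum_eq [DecidableEq X] {x y w w' : X} {V : Finset X} (hx : x ∉ V)
    (hins : pairSum c (insert x V) w = pairSum c (insert x V) w')
    (hadd : pairSum c V w + c s(w, y) = pairSum c V w' + c s(w', y)) :
    c s(y, w) - c s(y, w') = c s(x, w) - c s(x, w') := by
  rw [pairSum_insert c hx, pairSum_insert c hx] at hins
  rw [Sym2.eq_swap (a := y), Sym2.eq_swap (a := y)]
  linear_combination (norm := abel) hadd - hins

variable [Fintype X] [DecidableEq X] [DecidableEq G]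

def NoGadget (d lam : ℕ) : Prop :=
  ∀ A : Finset X, #A = d → #((univ \ A).image (pairSum c A)) ≤ lam - 1

def gadgetValues (U W : Finset X) : Finset G :=
  ({p ∈ (univ \ (U ∪ W)) ×ˢ (univ \ (U ∪ W)) | p.1 ≠ p.2}).image
    fun p => pairSum c U p.1 + c s(p.1, p.2) + pairSum c W p.2

def NoDoubleGadget (d d' m lam : ℕ) : Prop :=
  ∀ U W : Finset X, #U = d - 1 → #W = d' - 1 → #(U ∩ W) = m →
    #(gadgetValues c U W) ≤ lam - 1

variable {c}

theorem NoGadget.card_image_le {d lam : ℕ} (ha : NoGadget c d lam) {A s : Finset X}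
    (hA : #A = d) (hs : Disjoint s A) : #(s.image (pairSum c A)) ≤ lam - 1 :=
  (card_le_card (image_subset_image fun _ hw =>
    mem_sdiff.2 ⟨mem_univ _, disjoint_left.1 hs hw⟩)).trans (ha A hA)

theorem add_mem_gadgetValues {U W : Finset X} {w w' : X} (hw : w ∉ U ∪ W) (hw' : w' ∉ U ∪ W)
    (hne : w ≠ w') : pairSum c U w + c s(w, w') + pairSum c W w' ∈ gadgetValues c U W :=
  mem_image.2 ⟨(w, w'), mem_filter.2 ⟨mem_product.2 ⟨mem_sdiff.2 ⟨mem_univ _, hw⟩,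
    mem_sdiff.2 ⟨mem_univ _, hw'⟩⟩, hne⟩, rfl⟩

theorem gadgetValues_comm (U W : Finset X) : gadgetValues c U W = gadgetValues c W U := by
  suffices ∀ U W : Finset X, gadgetValues c U W ⊆ gadgetValues c W U from
    (this U W).antisymm (this W U)
  intro U W z hz
  obtain ⟨⟨w, w'⟩, hp, rfl⟩ := mem_image.1 hz
  simp only [mem_filter, mem_product, mem_sdiff, mem_univ, true_and, union_comm U] at hp
  convert add_mem_gadgetValues (c := c) hp.1.2 hp.1.1 (Ne.symm hp.2) using 1
  rw [Sym2.eq_swap]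
  abel

theorem card_image_pairSum_add_le {U W s : Finset X} {y : X} (hs : Disjoint s (U ∪ W))
    (hys : y ∉ s) (hyUW : y ∉ U ∪ W) :
    #(s.image fun w => pairSum c U w + c s(w, y)) ≤ #(gadgetValues c U W) :=
  calc #(s.image fun w => pairSum c U w + c s(w, y))
      ≤ #((gadgetValues c U W).image (· - pairSum c W y)) :=
        card_le_card fun z hz => by
          obtain ⟨w, hw, rfl⟩ := mem_image.1 hz
          exact mem_image.2 ⟨_, add_mem_gadgetValues (disjoint_left.1 hs hw) hyUW
            (ne_of_mem_of_not_mem hw hys), add_sub_cancel_right _ _⟩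
    _ ≤ #(gadgetValues c U W) := card_image_le

theorem NoDoubleGadget.card_gadgetValues_le {m r r' lam : ℕ}
    (hc : NoDoubleGadget c (m + r + 1) (m + r' + 1) m lam) {T₁ T₂ T₃ : Finset X}
    (h₁₂ : Disjoint T₁ T₂) (h₁₃ : Disjoint T₁ T₃) (h₂₃ : Disjoint T₂ T₃)
    (hT₁ : #T₁ = m) (hT₂ : #T₂ = r) (hT₃ : #T₃ = r') :
    #(gadgetValues c (T₁ ∪ T₂) (T₁ ∪ T₃)) ≤ lam - 1 :=
  hc _ _ (by rw [card_union_of_disjoint h₁₂]; omega)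
    (by rw [card_union_of_disjoint h₁₃]; omega)
    (by rw [← union_inter_distrib_left, disjoint_iff_inter_eq_empty.1 h₂₃, union_empty, hT₁])

theorem NoDoubleGadget.card_image_le {m r r' lam : ℕ}
    (hc : NoDoubleGadget c (m + r + 1) (m + r' + 1) m lam) {T₁ T₂ T₃ s : Finset X} {y : X}
    (h₁₂ : Disjoint T₁ T₂) (h₁₃ : Disjoint T₁ T₃) (h₂₃ : Disjoint T₂ T₃)
    (hT₁ : #T₁ = m) (hT₂ : #T₂ = r) (hT₃ : #T₃ = r')
    (hs : Disjoint s (T₁ ∪ T₂ ∪ T₃)) (hys : y ∉ s) (hyT : y ∉ T₁ ∪ T₂ ∪ T₃) :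
    #(s.image fun w => pairSum c (T₁ ∪ T₂) w + c s(w, y)) ≤ lam - 1 ∧
      #(s.image fun w => pairSum c (T₁ ∪ T₃) w + c s(w, y)) ≤ lam - 1 := by
  have hbound := hc.card_gadgetValues_le h₁₂ h₁₃ h₂₃ hT₁ hT₂ hT₃
  have hunion : (T₁ ∪ T₂) ∪ (T₁ ∪ T₃) = T₁ ∪ T₂ ∪ T₃ := by
    ext; simp only [mem_union]; tauto
  refine ⟨(card_image_pairSum_add_le ?_ hys ?_).trans hbound,
    (card_image_pairSum_add_le ?_ hys ?_).trans (gadgetValues_comm (c := c) _ _ ▸ hbound)⟩ <;>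
    simp only [hunion, union_comm (T₁ ∪ T₃), hs, hyT, not_false_eq_true]

end Gadgets

/-- The configuration behind the proof: `U = M ∪ R` and `W = M ∪ S` have sizes `m + r` and
`m + r'` and meet in `M`; `M'` is a copy of `M` making `(M' ∪ R, M' ∪ S)` a second such pair
avoiding `M`, and the spare vertex `y₀` replaces an element of `R` or `S`. -/
structure Frame (X : Type*) [DecidableEq X] (m r r' : ℕ) where
  M : Finset X
  R : Finset X
  S : Finset X
  M' : Finset X
  x₀ : X
  y₀ : X
  card_M : #M = m
  card_R : #R = r
  card_S : #S = r'
  card_M' : #M' = m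
  disjoint_M_R : Disjoint M R
  disjoint_union_S : Disjoint (M ∪ R) S
  disjoint_union_M' : Disjoint (M ∪ R ∪ S) M'
  x₀_notMem : x₀ ∉ M ∪ R ∪ S ∪ M'
  y₀_notMem : y₀ ∉ M ∪ R ∪ S ∪ M'
  x₀_ne_y₀ : x₀ ≠ y₀

namespace Frame

variable {X G : Type*} [DecidableEq X] {m r r' : ℕ}

theorem nonempty [Fintype X] (h : m + r + 1 + (m + r' + 1) ≤ Fintype.card X) :
    Nonempty (Frame X m r r') := by
  obtain ⟨M, -, hM⟩ := exists_disjoint_card_eq (∅ : Finset X) (k := m) (by simp; omega)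
  obtain ⟨R, hMR, hR⟩ := exists_disjoint_card_eq M (k := r) (by omega)
  have hMR' : #(M ∪ R) = m + r := by rw [card_union_of_disjoint hMR, hM, hR]
  obtain ⟨S, hS, hS'⟩ := exists_disjoint_card_eq (M ∪ R) (k := r') (by omega)
  have hMRS : #(M ∪ R ∪ S) = m + r + r' := by rw [card_union_of_disjoint hS, hMR', hS']
  obtain ⟨M', hM', hM''⟩ := exists_disjoint_card_eq (M ∪ R ∪ S) (k := m) (by omega)
  obtain ⟨P, hP, hP'⟩ := exists_disjoint_card_eq (M ∪ R ∪ S ∪ M') (k := 2)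
    (by rw [card_union_of_disjoint hM', hMRS, hM'']; omega)
  obtain ⟨x₀, y₀, hxy, rfl⟩ := card_eq_two.1 hP'
  exact ⟨⟨M, R, S, M', x₀, y₀, hM, hR, hS', hM'', hMR, hS, hM',
    fun h => disjoint_left.1 hP h (by simp), fun h => disjoint_left.1 hP h (by simp), hxy⟩⟩

variable (F : Frame X m r r')

def U : Finset X := F.M ∪ F.R

def W : Finset X := F.M ∪ F.S

def L : Finset X := insert F.x₀ (insert F.y₀ (F.M ∪ F.R ∪ F.S ∪ F.M'))

theorem card_L : #F.L = m + r + 1 + (m + r' + 1) := by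
  have hx₀ : F.x₀ ∉ insert F.y₀ (F.M ∪ F.R ∪ F.S ∪ F.M') := by
    simp only [mem_insert, not_or]; exact ⟨F.x₀_ne_y₀, F.x₀_notMem⟩
  rw [L, card_insert_of_notMem hx₀, card_insert_of_notMem F.y₀_notMem,
    card_union_of_disjoint F.disjoint_union_M', card_union_of_disjoint F.disjoint_union_S,
    card_union_of_disjoint F.disjoint_M_R, F.card_M, F.card_R, F.card_S, F.card_M']
  ring

variable [AddCommGroup G] (c : Sym2 X → G)

/-- Coordinates `α = c(x₀ ∪ U, ·)`, `β = c(x₀ ∪ W, ·)`, a copy of `γ = c(x₀ ∪ M' ∪ R, ·)`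
for each element of `M'` (so that there are `d + d'` coordinates also when `M = ∅`), and for
each `y ∈ U ∪ W` a coordinate differing from `γ`, `β` or `α` by `c(·, y) - c(·, x₀)`. -/
def fingerprint (w : X) : Bool ⊕ F.M' ⊕ F.M ⊕ F.R ⊕ F.S → G
  | .inl true => pairSum c (insert F.x₀ F.U) w
  | .inl false => pairSum c (insert F.x₀ F.W) w
  | .inr (.inl _) => pairSum c (insert F.x₀ (F.M' ∪ F.R)) w
  | .inr (.inr (.inl y)) => pairSum c (F.M' ∪ F.R) w + c s(w, y)
  | .inr (.inr (.inr (.inl y))) => pairSum c F.W w + c s(w, y)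
  | .inr (.inr (.inr (.inr y))) => pairSum c F.U w + c s(w, y)

theorem card_fingerprint_index :
    Fintype.card (Bool ⊕ F.M' ⊕ F.M ⊕ F.R ⊕ F.S) = m + r + 1 + (m + r' + 1) := by
  simp only [Fintype.card_sum, Fintype.card_bool, Fintype.card_coe, F.card_M, F.card_M',
    F.card_R, F.card_S]
  ring

theorem x₀_notMem_U : F.x₀ ∉ F.U := by grind [U, x₀_notMem]

theorem x₀_notMem_W : F.x₀ ∉ F.W := by grind [W, x₀_notMem]

theorem disjoint_M_S : Disjoint F.M F.S :=
  disjoint_of_subset_left subset_union_left F.disjoint_union_S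

theorem disjoint_R_S : Disjoint F.R F.S :=
  disjoint_of_subset_left subset_union_right F.disjoint_union_S

theorem card_U : #F.U = m + r := by
  rw [U, card_union_of_disjoint F.disjoint_M_R, F.card_M, F.card_R]

theorem card_W : #F.W = m + r' := by
  rw [W, card_union_of_disjoint F.disjoint_M_S, F.card_M, F.card_S]

theorem U_union_W_subset_L : F.U ∪ F.W ⊆ F.L := by grind [U, W, L]

variable {c} {w w₀ : X}

theorem sub_eq_of_fingerprint_eq (h : F.fingerprint c w = F.fingerprint c w₀) {y : X}
    (hy : y ∈ F.U ∪ F.W) : c s(y, w) - c s(y, w₀) = c s(F.x₀, w) - c s(F.x₀, w₀) := by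
  obtain hyM | hyR | hyS : y ∈ F.M ∨ y ∈ F.R ∨ y ∈ F.S := by grind [U, W]
  · obtain ⟨z, hz⟩ : F.M'.Nonempty :=
      card_pos.1 (by rw [F.card_M', ← F.card_M]; exact card_pos.2 ⟨y, hyM⟩)
    exact sub_eq_sub_of_pairSum_eq c (by grind [x₀_notMem]) (congrFun h (.inr (.inl ⟨z, hz⟩)))
      (congrFun h (.inr (.inr (.inl ⟨y, hyM⟩))))
  · exact sub_eq_sub_of_pairSum_eq c F.x₀_notMem_W (congrFun h (.inl false))
      (congrFun h (.inr (.inr (.inr (.inl ⟨y, hyR⟩)))))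
  · exact sub_eq_sub_of_pairSum_eq c F.x₀_notMem_U (congrFun h (.inl true))
      (congrFun h (.inr (.inr (.inr (.inr ⟨y, hyS⟩)))))

theorem nsmul_eq_zero_of_fingerprint_eq (h : F.fingerprint c w = F.fingerprint c w₀) :
    (m + r + 1) • (c s(F.x₀, w) - c s(F.x₀, w₀)) = 0 ∧
      (m + r' + 1) • (c s(F.x₀, w) - c s(F.x₀, w₀)) = 0 := by
  have hdiff : ∀ u ∈ insert F.x₀ (F.U ∪ F.W),
      c s(u, w) - c s(u, w₀) = c s(F.x₀, w) - c s(F.x₀, w₀) := by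
    intro u hu
    rcases mem_insert.1 hu with rfl | hu
    · rfl
    · exact F.sub_eq_of_fingerprint_eq h hu
  constructor
  · have := card_nsmul_eq_zero_of_sum_eq
      (fun u hu => hdiff u (insert_subset_insert _ subset_union_left hu))
      (congrFun h (.inl true))
    rwa [card_insert_of_notMem F.x₀_notMem_U, F.card_U] at this
  · have := card_nsmul_eq_zero_of_sum_eq
      (fun u hu => hdiff u (insert_subset_insert _ subset_union_right hu))
      (congrFun h (.inl false))
    rwa [card_insert_of_notMem F.x₀_notMem_W, F.card_W] at this

theorem pair_eq_of_fingerprint_eq {x y : X} (hx : F.fingerprint c x = F.fingerprint c w₀)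
    (hy : F.fingerprint c y = F.fingerprint c w₀) :
    c s(x, y) =
      pairSum c F.U x + c s(x, y) + pairSum c F.W y - (pairSum c F.U w₀ + pairSum c F.W w₀) +
        (c s(F.x₀, x) - c s(F.x₀, w₀)) + (c s(F.x₀, y) - c s(F.x₀, w₀)) := by
  have hα := congrFun hx (.inl true)
  have hβ := congrFun hy (.inl false)
  simp only [fingerprint, pairSum_insert c F.x₀_notMem_U, pairSum_insert c F.x₀_notMem_W]
    at hα hβ
  linear_combination (norm := abel) -hα - hβ

variable [Fintype X] [DecidableEq G] {lam : ℕ}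

theorem card_image_fingerprint_le (ha : NoGadget c (m + r + 1) lam)
    (hb : NoGadget c (m + r' + 1) lam) (hc : NoDoubleGadget c (m + r + 1) (m + r' + 1) m lam)
    (i : Bool ⊕ F.M' ⊕ F.M ⊕ F.R ⊕ F.S) :
    #(F.Lᶜ.image fun w => F.fingerprint c w i) ≤ lam - 1 := by
  have hL : ∀ {A}, A ⊆ F.L → Disjoint F.Lᶜ A := fun h => disjoint_compl_left.mono_right h
  have hLc : ∀ {y}, y ∈ F.L → y ∉ F.Lᶜ := fun h h' => mem_compl.1 h' h
  have hswap : ∀ {s : Finset X} {y}, y ∈ s → F.y₀ ∉ s → #(insert F.y₀ (s.erase y)) = #s :=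
    fun hy hy₀ => by
      rw [card_insert_of_notMem fun h => hy₀ (mem_of_mem_erase h), card_erase_add_one hy]
  rcases i with (_ | _) | _ | ⟨y, hy⟩ | ⟨y, hy⟩ | ⟨y, hy⟩
  case' inl.false =>
    refine hb.card_image_le ?_ (hL ?_)
    rw [card_insert_of_notMem ?_, W, card_union_of_disjoint ?_, F.card_M, F.card_S]
  case' inl.true =>
    refine ha.card_image_le ?_ (hL ?_)
    rw [card_insert_of_notMem ?_, U, card_union_of_disjoint ?_, F.card_M, F.card_R]
  case' inr.inl =>
    refine ha.card_image_le ?_ (hL ?_)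
    rw [card_insert_of_notMem ?_, card_union_of_disjoint ?_, F.card_M', F.card_R]
  case' inr.inr.inl =>
    refine (hc.card_image_le (T₁ := F.M') (T₂ := F.R) (T₃ := F.S) ?_ ?_ ?_
      F.card_M' F.card_R F.card_S (hL ?_) (hLc ?_) ?_).1
  case' inr.inr.inr.inl =>
    refine (hc.card_image_le (T₁ := F.M) (T₂ := insert F.y₀ (F.R.erase y))
      (T₃ := F.S) ?_ ?_ ?_ F.card_M ((hswap hy ?_).trans F.card_R) F.card_S (hL ?_) (hLc ?_)
      ?_).2
  case' inr.inr.inr.inr =>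
    refine (hc.card_image_le (T₁ := F.M) (T₂ := F.R)
      (T₃ := insert F.y₀ (F.S.erase y)) ?_ ?_ ?_ F.card_M F.card_R
      ((hswap hy ?_).trans F.card_S) (hL ?_) (hLc ?_) ?_).1
  all_goals grind [disjoint_left, L, U, W, disjoint_M_R, disjoint_union_S,
    disjoint_union_M', x₀_notMem, y₀_notMem, x₀_ne_y₀]

theorem exists_card_le_card_fiber (hlam : 2 ≤ lam) (ha : NoGadget c (m + r + 1) lam)
    (hb : NoGadget c (m + r' + 1) lam) (hc : NoDoubleGadget c (m + r + 1) (m + r' + 1) m lam)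
    (hX : m + r + 1 + (m + r' + 1) < Fintype.card X) :
    ∃ w₀, Fintype.card X ≤ (#{x ∈ F.Lᶜ | F.fingerprint c x = F.fingerprint c w₀} +
      (m + r + 1) + (m + r' + 1)) * (lam - 1) ^ (m + r + 1 + (m + r' + 1)) := by
  set N := m + r + 1 + (m + r' + 1)
  have hLc : #F.Lᶜ + N = Fintype.card X := by
    rw [card_compl, F.card_L]; omega
  obtain ⟨w₀, -, hfiber⟩ := exists_card_le_mul_card_fiber F.Lᶜ (F.fingerprint c)
    (card_pos.1 (by omega))
  have htypes : #(F.Lᶜ.image (F.fingerprint c)) ≤ (lam - 1) ^ N := by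
    have := card_image_pi_le_pow _ _ (F.card_image_fingerprint_le ha hb hc)
    rwa [F.card_fingerprint_index] at this
  refine ⟨w₀, ?_⟩
  calc Fintype.card X = #F.Lᶜ + N := hLc.symm
    _ ≤ #{x ∈ F.Lᶜ | F.fingerprint c x = F.fingerprint c w₀} * (lam - 1) ^ N +
        N * (lam - 1) ^ N :=
      add_le_add (hfiber.trans (Nat.mul_le_mul_left _ htypes))
        (Nat.le_mul_of_pos_right _ (Nat.one_le_pow _ _ (by omega)))
    _ = _ := by ring

end Frame

theorem exists_large_subset_of_noGadget {X G : Type*} [Fintype X] [DecidableEq X]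
    [AddCommGroup G] [DecidableEq G] {c : Sym2 X → G} {d d' m lam : ℕ}
    (hm : m + 1 ≤ min d d') (hlam : 2 ≤ lam) (ha : NoGadget c d lam) (hb : NoGadget c d' lam)
    (hc : NoDoubleGadget c d d' m lam) :
    ∃ (I : Finset X) (T : Finset G) (Δ : X → G),
      #T ≤ lam - 1 ∧ Fintype.card X ≤ (#I + d + d') * (lam - 1) ^ (d + d') ∧
      (∀ x ∈ I, d • Δ x = 0 ∧ d' • Δ x = 0) ∧
      ∀ x ∈ I, ∀ y ∈ I, x ≠ y → ∃ t ∈ T, c s(x, y) = t + Δ x + Δ y := by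
  obtain ⟨r, rfl⟩ : ∃ r, d = m + r + 1 := ⟨d - 1 - m, by omega⟩
  obtain ⟨r', rfl⟩ : ∃ r', d' = m + r' + 1 := ⟨d' - 1 - m, by omega⟩
  rcases le_or_gt (Fintype.card X) (m + r + 1 + (m + r' + 1)) with hX | hX
  · have hpow : 1 ≤ (lam - 1) ^ (m + r + 1 + (m + r' + 1)) := Nat.one_le_pow _ _ (by omega)
    exact ⟨∅, ∅, 0, by simp, by nlinarith, by simp, by simp⟩
  obtain ⟨F⟩ := Frame.nonempty hX.le
  obtain ⟨w₀, hcard⟩ := F.exists_card_le_card_fiber hlam ha hb hc hX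
  have hI : ∀ x ∈ {x ∈ F.Lᶜ | F.fingerprint c x = F.fingerprint c w₀},
      x ∉ F.U ∪ F.W ∧ F.fingerprint c x = F.fingerprint c w₀ := fun x hx =>
    ⟨fun h => mem_compl.1 (mem_filter.1 hx).1 (F.U_union_W_subset_L h), (mem_filter.1 hx).2⟩
  refine ⟨_, (gadgetValues c F.U F.W).image (· - (pairSum c F.U w₀ + pairSum c F.W w₀)),
    fun x => c s(F.x₀, x) - c s(F.x₀, w₀), card_image_le.trans ?_, hcard,
    fun x hx => F.nsmul_eq_zero_of_fingerprint_eq (hI x hx).2, fun x hx y hy hxy => ?_⟩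
  · exact hc.card_gadgetValues_le F.disjoint_M_R F.disjoint_M_S F.disjoint_R_S F.card_M
      F.card_R F.card_S
  · exact ⟨_, mem_image_of_mem _ (add_mem_gadgetValues (hI x hx).1 (hI y hy).1 hxy),
      F.pair_eq_of_fingerprint_eq (hI x hx).2 (hI y hy).2⟩

theorem stmt_3_general (n d d' lam m : ℕ)
    (hlam : 2 ≤ lam) (hm : m + 1 ≤ min d d')
    (κ : ℕ) (hκ : κ = Nat.gcd d (Nat.gcd d' n))
    (Γ : Type*) [AddCommGroup Γ] [Fintype Γ] (hΓ : Fintype.card Γ ∣ n)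
    (H' : AddSubgroup Γ)
    (X : Type*) [Fintype X] [DecidableEq X]
    (c : Sym2 X → Γ ⧸ H')
    -- (a): no (d, λ)-gadget
    (ha : ∀ A : Finset X, A.card = d →
      ((Finset.univ \ A).image (fun w => ∑ u ∈ A, c s(u, w))).card ≤ lam - 1)
    -- (b): no (d', λ)-gadget
    (hb : ∀ A : Finset X, A.card = d' →
      ((Finset.univ \ A).image (fun w => ∑ u ∈ A, c s(u, w))).card ≤ lam - 1)
    -- (c): no (d, d', m, λ)-gadget
    (hc : ∀ U W : Finset X, U.card = d - 1 → W.card = d' - 1 → (U ∩ W).card = m →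
      ((((Finset.univ \ (U ∪ W)) ×ˢ (Finset.univ \ (U ∪ W))).filter
          (fun p : X × X => p.1 ≠ p.2)).image
        (fun p : X × X => (∑ u ∈ U, c s(u, p.1)) + c s(p.1, p.2) +
          ∑ w ∈ W, c s(w, p.2))).card ≤ lam - 1) :
    ∃ (I : Finset X) (S : Finset Γ) (C' : X → Γ),
      S.card ≤ lam - 1 ∧
      Fintype.card X ≤ (I.card + d + d') * (lam - 1) ^ (d + d') ∧
      (∀ x ∈ I, κ • C' x ∈ H') ∧
      (∀ x ∈ I, ∀ y ∈ I, x ≠ y →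
        ∃ sc ∈ S, c s(x, y) = QuotientAddGroup.mk (sc + C' x + C' y)) := by
  obtain ⟨I, T, Δ, hT, hX, hΔ, hpair⟩ :=
    exists_large_subset_of_noGadget (c := c) hm hlam ha hb hc
  refine ⟨I, T.image Quotient.out, fun x => (Δ x).out, card_image_le.trans hT, hX,
    fun x hx => ?_, fun x hx y hy hxy => ?_⟩
  · rw [← QuotientAddGroup.eq_zero_iff, QuotientAddGroup.mk_nsmul, QuotientAddGroup.out_eq', hκ]
    exact gcd_nsmul_eq_zero.2 ⟨(hΔ x hx).1, gcd_nsmul_eq_zero.2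
      ⟨(hΔ x hx).2, QuotientAddGroup.nsmul_eq_zero_of_card_dvd hΓ _⟩⟩
  · obtain ⟨t, ht, h⟩ := hpair x hx y hy hxy
    exact ⟨t.out, mem_image_of_mem _ ht,
      by simpa only [QuotientAddGroup.mk_add, QuotientAddGroup.out_eq'] using h⟩

/-- Core structural lemma: if a quotient colouring of the pairs of a finite set `X`
admits no `(d,λ)`-, `(d',λ)`- or `(d,d',m,λ)`-gadget, then there are a large set
`I ⊆ X`, a set `S ⊆ Γ` with at most `λ - 1` elements, and a vertex colouring
`C' : I → Γ` with `κ·C'(x) ∈ H'`, such that every pair colour on `I` is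
`s + C'(x) + C'(y) + H'` for some `s ∈ S`. -/
theorem stmt_3 (n d d' lam m : ℕ) (hn : 0 < n) (hd : 0 < d) (hd' : 0 < d')
    (hlam : 2 ≤ lam) (hm : m + 1 ≤ min d d')
    (κ : ℕ) (hκ : κ = Nat.gcd d (Nat.gcd d' n))
    (Γ : Type*) [AddCommGroup Γ] [Fintype Γ] (hΓ : Fintype.card Γ ∣ n)
    (H' : AddSubgroup Γ)
    (X : Type*) [Fintype X] [DecidableEq X]
    (c : Sym2 X → Γ ⧸ H')
    -- (a): no (d, λ)-gadget
    (ha : ∀ A : Finset X, A.card = d →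
      ((Finset.univ \ A).image (fun w => ∑ u ∈ A, c s(u, w))).card ≤ lam - 1)
    -- (b): no (d', λ)-gadget
    (hb : ∀ A : Finset X, A.card = d' →
      ((Finset.univ \ A).image (fun w => ∑ u ∈ A, c s(u, w))).card ≤ lam - 1)
    -- (c): no (d, d', m, λ)-gadget
    (hc : ∀ U W : Finset X, U.card = d - 1 → W.card = d' - 1 → (U ∩ W).card = m →
      ((((Finset.univ \ (U ∪ W)) ×ˢ (Finset.univ \ (U ∪ W))).filter
          (fun p : X × X => p.1 ≠ p.2)).image
        (fun p : X × X => (∑ u ∈ U, c s(u, p.1)) + c s(p.1, p.2) +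
          ∑ w ∈ W, c s(w, p.2))).card ≤ lam - 1) :
    ∃ (I : Finset X) (S : Finset Γ) (C' : X → Γ),
      S.card ≤ lam - 1 ∧
      Fintype.card X ≤ (I.card + d + d') * (lam - 1) ^ (d + d') ∧
      (∀ x ∈ I, κ • C' x ∈ H') ∧
      (∀ x ∈ I, ∀ y ∈ I, x ≠ y →
        ∃ sc ∈ S, c s(x, y) = QuotientAddGroup.mk (sc + C' x + C' y)) :=
  stmt_3_general n d d' lam m hlam hm κ hκ Γ hΓ H' X c ha hb hc
end

section
/- With the setup described in the context, for all a, b in the image of 𝒞 there exists an element s_{a,b} ∈ Γ, which for a = b can be chosen to equal s_a, such that for all a₁ ∈ 𝒞_a and b₁ ∈ 𝒞_b with a₁ ≠ b₁, the colour c({a₁, b₁}) equals the image of s_{a,b} + 𝒞*(a₁) + 𝒞*(b₁) under the quotient map Γ₀ → Γ₀/H'. -/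
/-- In the Phase-2 setup (no `(d,2)`- or `(d',2)`-gadgets, pair colours within each
vertex-colour class `𝒞_t` given by `s_t + 𝒞*(x) + 𝒞*(y) + H'`), for all `a, b` in
the image of `𝒞` there is `s_{a,b} ∈ Γ` (equal to `s_a` when `a = b`) such that
`c({a₁, b₁}) = s_{a,b} + 𝒞*(a₁) + 𝒞*(b₁) + H'` for all `a₁ ∈ 𝒞_a`, `b₁ ∈ 𝒞_b`
with `a₁ ≠ b₁`. -/
theorem stmt_4 (n d d' Δ : ℕ) (hn : 0 < n) (hd : 0 < d) (hd' : 0 < d')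
    (hΔ : 2 ≤ Δ) (hdΔ : d ≤ Δ) (hd'Δ : d' ≤ Δ)
    (κ : ℕ) (hκ : κ = Nat.gcd d (Nat.gcd d' n))
    (Γ₀ : Type*) [AddCommGroup Γ₀] [Fintype Γ₀] [DecidableEq Γ₀]
    (hΓ₀ : Fintype.card Γ₀ = n)
    (Γ H' : AddSubgroup Γ₀) (hH'Γ : H' ≤ Γ)
    (X : Type*) [Fintype X] [DecidableEq X]
    (c : Sym2 X → Γ₀ ⧸ H')
    -- pair colours lie in the image of Γ in Γ₀/H'
    (hcΓ : ∀ x y : X, x ≠ y → ∃ g ∈ Γ, c s(x, y) = QuotientAddGroup.mk g)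
    (𝒞 : X → Γ₀)
    -- nonempty colour classes have at least 2Δ² elements
    (hclass : ∀ t : Γ₀, (∃ x, 𝒞 x = t) →
      2 * Δ ^ 2 ≤ (Finset.univ.filter (fun x => 𝒞 x = t)).card)
    (Cs : X → Γ₀) (hCsΓ : ∀ x, Cs x ∈ Γ) (hCsH : ∀ x, κ • Cs x ∈ H')
    (st : Γ₀ → Γ₀) (hstΓ : ∀ t : Γ₀, (∃ x, 𝒞 x = t) → st t ∈ Γ)
    (hst : ∀ t : Γ₀, ∀ x y : X, x ≠ y → 𝒞 x = t → 𝒞 y = t →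
      c s(x, y) = QuotientAddGroup.mk (st t + Cs x + Cs y))
    -- X has no (d, 2)-gadget and no (d', 2)-gadget
    (hgad : ∀ e : ℕ, e = d ∨ e = d' → ∀ A : Finset X, A.card = e →
      ∀ w ∉ A, ∀ w' ∉ A,
        (∑ u ∈ A, c s(u, w)) + QuotientAddGroup.mk (e • 𝒞 w)
          = (∑ u ∈ A, c s(u, w')) + QuotientAddGroup.mk (e • 𝒞 w')) :
    ∀ a b : Γ₀, (∃ x, 𝒞 x = a) → (∃ x, 𝒞 x = b) →
      ∃ sab ∈ Γ, (a = b → sab = st a) ∧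
        ∀ a₁ b₁ : X, 𝒞 a₁ = a → 𝒞 b₁ = b → a₁ ≠ b₁ →
          c s(a₁, b₁) = QuotientAddGroup.mk (sab + Cs a₁ + Cs b₁) := by
  -- Key lemma: for a₁, a₂ in the same class and b₁ outside the class,
  -- c(a₁,b₁) - Cs a₁ = c(a₂,b₁) - Cs a₂.
  have key : ∀ a₁ a₂ b₁ : X, 𝒞 a₁ = 𝒞 a₂ → 𝒞 b₁ ≠ 𝒞 a₁ →
      c s(a₁, b₁) - QuotientAddGroup.mk (Cs a₁)
        = c s(a₂, b₁) - QuotientAddGroup.mk (Cs a₂) := by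
    intro a₁ a₂ b₁ h12 hb
    by_cases hne : a₁ = a₂
    · subst hne; rfl
    · set t := 𝒞 a₁ with ht
      set F := Finset.univ.filter (fun x => 𝒞 x = t) with hF
      have hFcard : 2 * Δ ^ 2 ≤ F.card := hclass t ⟨a₁, rfl⟩
      set S := F \ {a₁, a₂} with hSdef
      have hpair : ({a₁, a₂} : Finset X).card ≤ 2 :=
        le_trans (Finset.card_insert_le _ _) (by simp)
      have hSlow : F.card - 2 ≤ S.card := by
        rw [hSdef]
        have h1 := Finset.le_card_sdiff ({a₁, a₂} : Finset X) F
        omega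
      have hΔ3 : Δ + 3 ≤ 2 * Δ ^ 2 := by nlinarith
      have hScard : d + 1 ≤ S.card := by omega
      obtain ⟨B, hBS, hBcard⟩ := Finset.exists_subset_card_eq (show d - 1 ≤ S.card by omega)
      have hSmem : ∀ x ∈ S, 𝒞 x = t ∧ x ≠ a₁ ∧ x ≠ a₂ := by
        intro x hx
        rw [hSdef, Finset.mem_sdiff, hF, Finset.mem_filter, Finset.mem_insert,
          Finset.mem_singleton] at hx
        tauto
      have ha₁B : a₁ ∉ B := fun h => ((hSmem a₁ (hBS h)).2.1) rfl
      have ha₂B : a₂ ∉ B := fun h => ((hSmem a₂ (hBS h)).2.2) rfl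
      have hb₁B : b₁ ∉ B := fun h => hb ((hSmem b₁ (hBS h)).1)
      have hwex : (S \ B).Nonempty := by
        rw [← Finset.card_pos, Finset.card_sdiff_of_subset hBS]; omega
      obtain ⟨w, hw⟩ := hwex
      obtain ⟨hwS, hwB⟩ := Finset.mem_sdiff.mp hw
      obtain ⟨hwt, hwa₁, hwa₂⟩ := hSmem w hwS
      have hA₁card : (insert a₁ B).card = d := by
        rw [Finset.card_insert_of_notMem ha₁B]; omega
      have hA₂card : (insert a₂ B).card = d := by
        rw [Finset.card_insert_of_notMem ha₂B]; omega
      have hwA₁ : w ∉ insert a₁ B := by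
        simp only [Finset.mem_insert]; tauto
      have hwA₂ : w ∉ insert a₂ B := by
        simp only [Finset.mem_insert]; tauto
      have hb₁a₁ : b₁ ≠ a₁ := fun h => hb (by rw [h])
      have hb₁a₂ : b₁ ≠ a₂ := fun h => hb (by rw [h, ← h12])
      have hb₁A₁ : b₁ ∉ insert a₁ B := by
        simp only [Finset.mem_insert]; tauto
      have hb₁A₂ : b₁ ∉ insert a₂ B := by
        simp only [Finset.mem_insert]; tauto
      have E₁ := hgad d (Or.inl rfl) (insert a₁ B) hA₁card w hwA₁ b₁ hb₁A₁
      have E₂ := hgad d (Or.inl rfl) (insert a₂ B) hA₂card w hwA₂ b₁ hb₁A₂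
      rw [Finset.sum_insert ha₁B, Finset.sum_insert ha₁B] at E₁
      rw [Finset.sum_insert ha₂B, Finset.sum_insert ha₂B] at E₂
      have h := congrArg₂ (· - ·) E₁ E₂
      simp only [add_assoc] at h
      simp only [add_sub_add_right_eq_sub] at h
      -- h : c s(a₁, w) - c s(a₂, w) = c s(a₁, b₁) - c s(a₂, b₁)
      rw [sub_eq_sub_iff_sub_eq_sub]
      rw [← h, hst t a₁ w (Ne.symm hwa₁) rfl hwt,
        hst t a₂ w (Ne.symm hwa₂) h12.symm hwt]
      have hgrp : (st t + Cs a₁ + Cs w) - (st t + Cs a₂ + Cs w)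
          = Cs a₁ - Cs a₂ := by abel
      rw [← QuotientAddGroup.mk_sub, hgrp, QuotientAddGroup.mk_sub]
  rintro a b ⟨a₀, ha₀⟩ ⟨b₀, hb₀⟩
  by_cases hab : a = b
  · subst hab
    exact ⟨st a, hstΓ a ⟨a₀, ha₀⟩, fun _ => rfl,
      fun a₁ b₁ h1 h2 hne => hst a a₁ b₁ hne h1 h2⟩
  · have hne0 : a₀ ≠ b₀ := fun h => hab (by rw [← ha₀, ← hb₀, h])
    obtain ⟨g, hgΓ, hg⟩ := hcΓ a₀ b₀ hne0
    refine ⟨g - Cs a₀ - Cs b₀, sub_mem (sub_mem hgΓ (hCsΓ a₀)) (hCsΓ b₀),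
      fun h => absurd h hab, ?_⟩
    intro a₁ b₁ h1 h2 hne
    have k1 := key a₁ a₀ b₁ (by rw [h1, ha₀]) (by rw [h2, h1]; exact fun h => hab h.symm)
    have k2 : c s(a₀, b₁) - QuotientAddGroup.mk (Cs b₁)
        = c s(a₀, b₀) - QuotientAddGroup.mk (Cs b₀) := by
      have := key b₁ b₀ a₀ (by rw [h2, hb₀]) (by rw [ha₀, h2]; exact hab)
      rwa [Sym2.eq_swap (a := b₁) (b := a₀), Sym2.eq_swap (a := b₀) (b := a₀)] at this
    calc c s(a₁, b₁)
        = (c s(a₀, b₁) - QuotientAddGroup.mk (Cs a₀)) + QuotientAddGroup.mk (Cs a₁) :=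
          eq_add_of_sub_eq k1
      _ = (((c s(a₀, b₀) - QuotientAddGroup.mk (Cs b₀)) + QuotientAddGroup.mk (Cs b₁))
            - QuotientAddGroup.mk (Cs a₀)) + QuotientAddGroup.mk (Cs a₁) := by
          rw [eq_add_of_sub_eq k2]
      _ = QuotientAddGroup.mk (g - Cs a₀ - Cs b₀ + Cs a₁ + Cs b₁) := by
          rw [hg, ← QuotientAddGroup.mk_sub, ← QuotientAddGroup.mk_add,
            ← QuotientAddGroup.mk_sub, ← QuotientAddGroup.mk_add]
          exact congrArg _ (by abel)
end

section
/- Let Γ be a finite additive abelian group, κ a positive integer, and let 𝒦 denote the number of elements g ∈ Γ with κ·g = 0. Then for every subset X ⊆ Γ with |X| = x, the subgroup ⟨X⟩ generated by X satisfies |⟨X⟩| · 𝒦 ≤ |Γ| · κ^x. -/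
/-!
Write `H = ⟨X⟩` and `T = Γ[κ]`. The quotient `T ⧸ (H ⊓ T)` embeds in `Γ ⧸ H`, so
`|H| · |T| ≤ |Γ| · |H ⊓ T|`. Now `H ⊓ T` is the `κ`-torsion of `H`, i.e. the kernel of
multiplication by `κ` on the finite group `H`, so it has as many elements as the cokernel
`H ⧸ κH`. That cokernel is a `ℤ/κ`-module spanned by the images of the elements of `X`,
hence has at most `κ ^ |X|` elements.
-/

open AddSubgroup

@[to_additive card_mul_card_le_card_mul_card_inf]
theorem Subgroup.card_mul_card_le_card_mul_card_inf {G : Type*} [Group G] [Finite G]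
    (H K : Subgroup G) : Nat.card H * Nat.card K ≤ Nat.card G * Nat.card ↥(H ⊓ K) := by
  have hK : Nat.card ↥(H ⊓ K) * H.relIndex K = Nat.card K := by
    simpa [Subgroup.relIndex_bot_left] using Subgroup.relIndex_inf_mul_relIndex ⊥ H K
  have hrel : H.relIndex K ≤ H.index := by
    simpa using Subgroup.relIndex_le_of_le_right le_top
      (H.relIndex_top_right ▸ Subgroup.index_ne_zero_of_finite)
  calc Nat.card H * Nat.card K = Nat.card H * H.relIndex K * Nat.card ↥(H ⊓ K) := by
        rw [← hK]; ring
    _ ≤ Nat.card H * H.index * Nat.card ↥(H ⊓ K) := by gcongr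
    _ = Nat.card G * Nat.card ↥(H ⊓ K) := by rw [Subgroup.card_mul_index]

@[to_additive]
theorem MonoidHom.card_ker_eq_index_range {G : Type*} [Group G] [Finite G] (f : G →* G) :
    Nat.card f.ker = f.range.index := by
  have hker := f.ker.card_mul_index
  rw [Subgroup.index_ker, ← f.range.card_mul_index, mul_comm] at hker
  exact Nat.eq_of_mul_eq_mul_left Nat.card_pos hker

theorem Module.natCard_le_pow_of_span_range_eq_top {R M ι : Type*} [Semiring R] [Finite R]
    [AddCommMonoid M] [Module R M] [Fintype ι] {v : ι → M}
    (hv : Submodule.span R (Set.range v) = ⊤) : Nat.card M ≤ Nat.card R ^ Fintype.card ι := by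
  have hsurj : Function.Surjective fun c : ι → R => ∑ i, c i • v i := fun m =>
    (Submodule.mem_span_range_iff_exists_fun R).mp (hv ▸ Submodule.mem_top)
  simpa [Nat.card_fun] using Nat.card_le_card_of_surjective _ hsurj

theorem AddSubgroup.index_range_nsmul_le {H ι : Type*} [AddCommGroup H] [Fintype ι] {κ : ℕ}
    [NeZero κ] {v : ι → H} (hv : closure (Set.range v) = ⊤) :
    (nsmulAddMonoidHom κ : H →+ H).range.index ≤ κ ^ Fintype.card ι := by
  set N := (nsmulAddMonoidHom κ : H →+ H).range
  have : Module (ZMod κ) (H ⧸ N) := QuotientAddGroup.zmodModule (n := κ) fun h => ⟨h, rfl⟩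
  have hclosure : closure (Set.range (QuotientAddGroup.mk' N ∘ v)) = ⊤ := by
    rw [Set.range_comp, ← AddMonoidHom.map_closure, hv,
      map_top_of_surjective _ (QuotientAddGroup.mk'_surjective N)]
  have hspan : Submodule.span (ZMod κ) (Set.range (QuotientAddGroup.mk' N ∘ v)) = ⊤ := by
    refine eq_top_iff.mpr fun q _ => ?_
    have hle : closure (Set.range (QuotientAddGroup.mk' N ∘ v)) ≤
        (Submodule.span (ZMod κ) (Set.range (QuotientAddGroup.mk' N ∘ v))).toAddSubgroup :=
      (closure_le _).mpr Submodule.subset_span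
    exact hle (hclosure ▸ mem_top q)
  simpa [index_eq_card] using Module.natCard_le_pow_of_span_range_eq_top hspan

theorem AddSubgroup.card_torsionBy_le {H ι : Type*} [AddCommGroup H] [Finite H] [Fintype ι]
    {κ : ℕ} [NeZero κ] {v : ι → H} (hv : closure (Set.range v) = ⊤) :
    Nat.card (torsionBy H κ) ≤ κ ^ Fintype.card ι := by
  have hker : torsionBy H κ = (nsmulAddMonoidHom κ : H →+ H).ker := by
    ext; simp
  rw [hker, AddMonoidHom.card_ker_eq_index_range]
  exact index_range_nsmul_le hv

theorem AddSubgroup.card_closure_inf_torsionBy_le {Γ : Type*} [AddCommGroup Γ] [Finite Γ]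
    {κ : ℕ} [NeZero κ] (X : Finset Γ) :
    Nat.card ↥(closure (X : Set Γ) ⊓ torsionBy Γ κ) ≤ κ ^ X.card := by
  set H := closure (X : Set Γ)
  have hcomap : torsionBy H κ = (torsionBy Γ κ).comap H.subtype := by
    ext h
    simp only [mem_comap, torsionBy.nsmul_iff, coe_subtype]
    norm_cast
  have hcard : Nat.card ↥(H ⊓ torsionBy Γ κ) = Nat.card (torsionBy H κ) := by
    rw [hcomap, ← card_map_of_injective H.subtype_injective, map_comap_eq, range_subtype]
  let v : X → H := fun g => ⟨g, subset_closure g.2⟩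
  have hv : closure (Set.range v) = ⊤ := by
    convert closure_closure_coe_preimage (k := (X : Set Γ)) using 2
    ext h
    simp [v, Subtype.ext_iff]
  rw [hcard, ← Fintype.card_coe]
  exact card_torsionBy_le hv

/-- Let `Γ` be a finite abelian group with `𝒦` elements of order `κ` (i.e. with
`κ • g = 0`). Then any subset `X ⊆ Γ` of cardinality `x` generates a subgroup of
order at most `|Γ| · κ^x / 𝒦`. -/
theorem stmt_7 (Γ : Type*) [AddCommGroup Γ] [Fintype Γ] [DecidableEq Γ]
    (κ : ℕ) (hκ : 0 < κ) (X : Finset Γ) (x : ℕ) (hx : X.card = x) :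
    Nat.card (AddSubgroup.closure (X : Set Γ)) *
      (Finset.univ.filter (fun g : Γ => κ • g = 0)).card ≤
    Fintype.card Γ * κ ^ x := by
  subst hx
  have : NeZero κ := ⟨hκ.ne'⟩
  have htorsion :
      (Finset.univ.filter fun g : Γ => κ • g = 0).card = Nat.card (torsionBy Γ κ) := by
    rw [← Fintype.card_subtype, ← Nat.card_eq_fintype_card]
    exact Nat.card_congr (Equiv.subtypeEquivRight fun _ => torsionBy.nsmul_iff.symm)
  rw [htorsion, ← Nat.card_eq_fintype_card]
  calc _ ≤ Nat.card Γ * Nat.card ↥(closure (X : Set Γ) ⊓ torsionBy Γ κ) :=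
        card_mul_card_le_card_mul_card_inf _ _
    _ ≤ Nat.card Γ * κ ^ X.card := by gcongr; exact card_closure_inf_torsionBy_le X
end
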